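/- arXiv:2306.02674 — 2 statements merged into one kernel-verified Lean document; each statement's English description precedes it below -/
import Mathlib

section
/- For n ≥ 2, the minimal height of the Kuhn simplex T̂ ⊂ ℝ^n equals 1/√2; more precisely, the heights over the hyperfaces opposite to v₀ and v_n equal 1, and the heights over the hyperfaces opposite to v_i for 1 ≤ i ≤ n−1 equal 1/√2. -/
open Metric Set

/-- Diameter of the largest closed ball inscribed in `S`. -/
noncomputable def inDiam {n : ℕ} (S : Set (EuclideanSpace ℝ (Fin n))) : ℝ :=
  2 * sSup {r : ℝ | 0 ≤ r ∧ ∃ c, Metric.closedBall c r ⊆ S}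

/-- Diameter of the smallest closed ball containing `S`. -/
noncomputable def circumDiam {n : ℕ} (S : Set (EuclideanSpace ℝ (Fin n))) : ℝ :=
  2 * sInf {r : ℝ | 0 ≤ r ∧ ∃ c, S ⊆ Metric.closedBall c r}

/-- Shape regularity `γ(S) = R(S)/r(S)`. -/
noncomputable def shapeReg {n : ℕ} (S : Set (EuclideanSpace ℝ (Fin n))) : ℝ :=
  circumDiam S / inDiam S

/-- Height of the simplex with vertices `v` over the hyperface opposite vertex `i`. -/
noncomputable def simplexHeight {n : ℕ} (v : Fin (n + 1) → EuclideanSpace ℝ (Fin n))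
    (i : Fin (n + 1)) : ℝ :=
  sSup ((fun x => Metric.infDist x (convexHull ℝ (v '' {i}ᶜ))) ''
    convexHull ℝ (Set.range v))

/-- Minimal height of the simplex with vertices `v`. -/
noncomputable def minHeight {n : ℕ} (v : Fin (n + 1) → EuclideanSpace ℝ (Fin n)) : ℝ :=
  ⨅ i, simplexHeight v i

/-- The `k`-th vertex of the Kuhn simplex, `v_k = e_1 + ⋯ + e_k`. -/
noncomputable def kuhnVertex (n : ℕ) (k : Fin (n + 1)) : EuclideanSpace ℝ (Fin n) :=
  (WithLp.equiv 2 (Fin n → ℝ)).symm fun i => if (i : ℕ) < (k : ℕ) then 1 else 0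

/-- The Kuhn simplex `conv{0, e₁, e₁+e₂, …, e₁+⋯+e_n} ⊂ ℝⁿ`. -/
noncomputable def kuhnSimplex (n : ℕ) : Set (EuclideanSpace ℝ (Fin n)) :=
  convexHull ℝ (Set.range (kuhnVertex n))

/-!
The sublevel sets `{x | infDist x F < δ}` of the distance to a convex set `F` are its
thickenings, which are convex; so the distance to a face is maximised over the simplex at a
vertex, namely at the opposite one, and each height is the distance from `v_i` to the face `f_i`.

That distance is `dist (v_i) y₀` for the point `y₀ ∈ f_i` satisfying the variational inequality
`⟪v_i - y₀, y - y₀⟫ ≤ 0` at every vertex `y` of `f_i`. For `v₀` and `v_n` this is the adjacent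
vertex, as `v₀ - v₁ = -e₁` and `v_n - v_{n-1} = e_n` are orthogonal to their faces. For `0 < i < n`
it is the midpoint of `v_{i-1}` and `v_{i+1}`: then `v_i - y₀ = (e_i - e_{i+1}) / 2`, the linear
form `⟪e_i - e_{i+1}, ·⟫` vanishes at every vertex but `v_i`, and `‖v_i - y₀‖ = √2 / 2`.
-/

open scoped RealInnerProductSpace

section

variable {E : Type*} [NormedAddCommGroup E]

theorem infDist_le_of_mem_convexHull [NormedSpace ℝ E] {s F : Set E} (hF : Convex ℝ F)
    (hne : F.Nonempty) {r : ℝ} (hs : ∀ y ∈ s, infDist y F ≤ r) {x : E}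
    (hx : x ∈ convexHull ℝ s) : infDist x F ≤ r := by
  refine le_of_forall_gt fun δ hδ => ?_
  have hsub : convexHull ℝ s ⊆ thickening δ F :=
    convexHull_min (fun y hy => (mem_thickening_iff_infDist_lt hne).2 ((hs y hy).trans_lt hδ))
      (hF.thickening δ)
  exact (mem_thickening_iff_infDist_lt hne).1 (hsub hx)

variable [InnerProductSpace ℝ E]

theorem infDist_convexHull_eq_dist {s : Set E} {x y₀ : E} (hy₀ : y₀ ∈ convexHull ℝ s)
    (hs : ∀ y ∈ s, ⟪x - y₀, y - y₀⟫ ≤ 0) : infDist x (convexHull ℝ s) = dist x y₀ := by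
  have hhalf : Convex ℝ {y | ⟪x - y₀, y - y₀⟫ ≤ 0} := by
    simp_rw [inner_sub_right, sub_nonpos]
    exact convex_halfSpace_le (innerₛₗ ℝ (x - y₀)).isLinear _
  have hhull := (norm_eq_iInf_iff_real_inner_le_zero (convex_convexHull ℝ s) hy₀).2
    (convexHull_min hs hhalf)
  simpa only [infDist_eq_iInf, dist_eq_norm] using hhull.symm

theorem Orthonormal.norm_sub_eq_sqrt_two {ι : Type*} {v : ι → E} (hv : Orthonormal ℝ v)
    {i j : ι} (hij : i ≠ j) : ‖v i - v j‖ = √2 := by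
  rw [← Real.sqrt_sq (norm_nonneg _), norm_sub_sq_real, hv.norm_eq_one, hv.norm_eq_one,
    hv.inner_eq_zero hij]
  norm_num

end

theorem mem_convexHull_image_compl {ι E : Type*} [AddCommGroup E] [Module ℝ E] (v : ι → E)
    {i k : ι} (hk : k ≠ i) : v k ∈ convexHull ℝ (v '' {i}ᶜ) :=
  subset_convexHull ℝ _ ⟨k, hk, rfl⟩

theorem simplexHeight_eq_infDist {n : ℕ} (v : Fin (n + 1) → EuclideanSpace ℝ (Fin n))
    (i : Fin (n + 1)) : simplexHeight v i = infDist (v i) (convexHull ℝ (v '' {i}ᶜ)) := by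
  set F := convexHull ℝ (v '' {i}ᶜ)
  have hvi : v i ∈ convexHull ℝ (range v) := subset_convexHull ℝ _ (mem_range_self i)
  rcases F.eq_empty_or_nonempty with hF | hF
  · simp [simplexHeight, F, hF, Set.Nonempty.image_const ⟨_, hvi⟩]
  refine IsGreatest.csSup_eq ⟨mem_image_of_mem _ hvi, ?_⟩
  rintro r ⟨x, hx, rfl⟩
  refine infDist_le_of_mem_convexHull (convex_convexHull ℝ _) hF ?_ hx
  rintro _ ⟨k, rfl⟩
  by_cases hk : k = i
  · rw [hk]
  · rw [infDist_zero_of_mem (mem_convexHull_image_compl v hk)]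
    exact infDist_nonneg

theorem kuhnVertex_apply (n : ℕ) (k : Fin (n + 1)) (j : Fin n) :
    kuhnVertex n k j = if (j : ℕ) < k then 1 else 0 := rfl

theorem kuhnVertex_succ_sub_castSucc {n : ℕ} (k : Fin n) :
    kuhnVertex n k.succ - kuhnVertex n k.castSucc = EuclideanSpace.single k 1 := by
  ext j
  simp only [PiLp.sub_apply, kuhnVertex_apply, PiLp.single_apply, Fin.val_succ,
    Fin.val_castSucc, Fin.ext_iff]
  split_ifs <;> first | omega | norm_num

theorem inner_single_kuhnVertex {n : ℕ} (j : Fin n) (k : Fin (n + 1)) :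
    ⟪EuclideanSpace.single j 1, kuhnVertex n k⟫ = if (j : ℕ) < k then 1 else 0 := by
  simp [EuclideanSpace.inner_single_left, kuhnVertex_apply]

theorem simplexHeight_kuhnVertex_zero (n : ℕ) : simplexHeight (kuhnVertex (n + 1)) 0 = 1 := by
  have hedge : kuhnVertex (n + 1) 1 - kuhnVertex (n + 1) 0 = EuclideanSpace.single 0 1 := by
    simpa using kuhnVertex_succ_sub_castSucc (0 : Fin (n + 1))
  rw [simplexHeight_eq_infDist, infDist_convexHull_eq_dist
    (mem_convexHull_image_compl _ one_ne_zero), dist_comm, dist_eq_norm, hedge,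
    PiLp.norm_single, norm_one]
  rintro _ ⟨k, hk : k ≠ 0, rfl⟩
  rw [← neg_sub, hedge, inner_neg_left, inner_sub_right, inner_single_kuhnVertex,
    inner_single_kuhnVertex]
  simp [Fin.pos_iff_ne_zero, hk]

theorem simplexHeight_kuhnVertex_last (n : ℕ) :
    simplexHeight (kuhnVertex (n + 1)) (Fin.last (n + 1)) = 1 := by
  have hedge : kuhnVertex (n + 1) (Fin.last (n + 1)) - kuhnVertex (n + 1) (Fin.last n).castSucc =
      EuclideanSpace.single (Fin.last n) 1 := by
    simpa using kuhnVertex_succ_sub_castSucc (Fin.last n)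
  rw [simplexHeight_eq_infDist, infDist_convexHull_eq_dist
    (mem_convexHull_image_compl _ (Fin.castSucc_ne_last (Fin.last n))), dist_eq_norm, hedge,
    PiLp.norm_single, norm_one]
  rintro _ ⟨k, hk : k ≠ Fin.last _, rfl⟩
  have hkn : ¬n < (k : ℕ) := by have := Fin.val_lt_last hk; omega
  rw [hedge, inner_sub_right, inner_single_kuhnVertex, inner_single_kuhnVertex]
  simp [hkn]

theorem simplexHeight_kuhnVertex_of_pos_of_lt {n : ℕ} (i : Fin (n + 1)) (hi₀ : 0 < (i : ℕ))
    (hin : (i : ℕ) < n) : simplexHeight (kuhnVertex n) i = 1 / √2 := by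
  set v := kuhnVertex n
  set j₁ : Fin n := ⟨i - 1, by omega⟩
  set j₂ : Fin n := ⟨i, hin⟩
  have hj : j₁ ≠ j₂ := Fin.ne_of_val_ne (show (i : ℕ) - 1 ≠ i by omega)
  have hi₁ : j₁.succ = i := Fin.ext (show (i : ℕ) - 1 + 1 = i by omega)
  have hi₂ : j₂.castSucc = i := rfl
  have he₁ : v i - v j₁.castSucc = EuclideanSpace.single j₁ 1 := by
    rw [← hi₁]; exact kuhnVertex_succ_sub_castSucc j₁
  have he₂ : v j₂.succ - v i = EuclideanSpace.single j₂ 1 := by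
    rw [← hi₂]; exact kuhnVertex_succ_sub_castSucc j₂
  set u : EuclideanSpace ℝ (Fin n) := EuclideanSpace.single j₁ 1 - EuclideanSpace.single j₂ 1
  have hu : ‖u‖ = √2 := (EuclideanSpace.orthonormal_single (𝕜 := ℝ)).norm_sub_eq_sqrt_two hj
  have hperp : ∀ k ≠ i, ⟪u, v k⟫ = 0 := by
    intro k hk
    have : (k : ℕ) ≠ i := fun h => hk (Fin.ext h)
    rw [inner_sub_left, inner_single_kuhnVertex, inner_single_kuhnVertex]
    simp only [j₁, j₂]
    split_ifs <;> norm_num <;> omega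
  have ha : j₁.castSucc ≠ i := by simp [← hi₁, Fin.ext_iff]
  have hb : j₂.succ ≠ i := by simp [← hi₂, Fin.ext_iff]
  set y₀ := midpoint ℝ (v j₁.castSucc) (v j₂.succ)
  have hfoot : v i - y₀ = (1 / 2 : ℝ) • u := by
    simp only [y₀, u, midpoint_eq_smul_add, invOf_eq_inv, ← he₁, ← he₂]
    module
  have hy₀ : ⟪u, y₀⟫ = 0 := by
    simp only [y₀, midpoint_eq_smul_add]
    rw [inner_smul_right, inner_add_right, hperp _ ha, hperp _ hb, add_zero, mul_zero]
  rw [simplexHeight_eq_infDist, infDist_convexHull_eq_dist (segment_subset_convexHull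
    (mem_image_of_mem v ha) (mem_image_of_mem v hb) (midpoint_mem_segment _ _)),
    dist_eq_norm, hfoot, norm_smul, hu]
  · rw [Real.norm_of_nonneg (by norm_num)]
    field_simp
    norm_num
  rintro _ ⟨k, hk, rfl⟩
  rw [hfoot, inner_smul_left, inner_sub_right, hperp k hk, hy₀]
  simp

theorem minHeight_kuhnVertex {n : ℕ} (hn : 2 ≤ n) : minHeight (kuhnVertex n) = 1 / √2 := by
  obtain ⟨m, rfl⟩ : ∃ m, n = m + 1 := ⟨n - 1, by omega⟩
  have hmid := simplexHeight_kuhnVertex_of_pos_of_lt (n := m + 1)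
  have hle : 1 / √2 ≤ 1 := by rw [div_le_one (by positivity)]; simp
  refine le_antisymm ((ciInf_le (finite_range _).bddBelow 1).trans_eq (hmid 1 ?_ ?_))
    (le_ciInf fun i => ?_)
  · simp
  · rw [Fin.val_one]; omega
  obtain rfl | hi₀ := eq_or_ne i 0
  · exact (simplexHeight_kuhnVertex_zero m).symm ▸ hle
  obtain rfl | hin := eq_or_ne i (Fin.last _)
  · exact (simplexHeight_kuhnVertex_last m).symm ▸ hle
  rw [hmid i (Fin.pos_iff_ne_zero.2 hi₀) (Fin.val_lt_last hin)]

/-- For n ≥ 2, the heights of the Kuhn simplex over the faces opposite v₀ and v_n equal 1,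
those opposite v_i (1 ≤ i ≤ n−1) equal 1/√2, and the minimal height equals 1/√2. -/
theorem kuhn_heights (n : ℕ) (hn : 2 ≤ n) :
    simplexHeight (kuhnVertex n) 0 = 1 ∧
    simplexHeight (kuhnVertex n) (Fin.last n) = 1 ∧
    (∀ i : Fin (n + 1), 1 ≤ (i : ℕ) → (i : ℕ) ≤ n - 1 →
      simplexHeight (kuhnVertex n) i = 1 / Real.sqrt 2) ∧
    minHeight (kuhnVertex n) = 1 / Real.sqrt 2 := by
  obtain ⟨m, rfl⟩ : ∃ m, n = m + 1 := ⟨n - 1, by omega⟩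
  exact ⟨simplexHeight_kuhnVertex_zero m, simplexHeight_kuhnVertex_last m,
    fun i h₀ hi => simplexHeight_kuhnVertex_of_pos_of_lt i h₀ (by omega), minHeight_kuhnVertex hn⟩
end

section
/- The inradius diameter of the Kuhn simplex T̂ ⊂ ℝ^n satisfies 1/r(T̂) = 1 + (n−1)/√2. -/
open Metric Set

/-!
Write `T̂ = {x | 1 ≥ x₀ ≥ x₁ ≥ ⋯ ≥ x_{n-1} ≥ 0}` as an intersection of half-spaces with normals
`±eᵢ` (length 1) and `e_j - e_i` (length `√2`). Since a ball `B(c, r)` lies in `{x | ⟪a, x⟫ ≤ b}`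
iff `⟪a, c⟫ + r‖a‖ ≤ b`, the ball `B(c, r)` lies in `T̂` iff `r ≤ cᵢ ≤ 1 - r` for all `i` and
`c_j + √2 r ≤ cᵢ` for `i < j`. Telescoping along consecutive indices between `c₀ ≤ 1 - r` and
`r ≤ c_{n-1}` gives `r (2 + (n - 1)√2) ≤ 1`, with equality at `cᵢ = r (1 + (n - 1 - i)√2)`.
-/

open EuclideanSpace Finset

theorem closedBall_subset_setOf_inner_le_iff {E : Type*} [NormedAddCommGroup E]
    [InnerProductSpace ℝ E] {a c : E} {r b : ℝ} (hr : 0 ≤ r) :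
    closedBall c r ⊆ {x | inner ℝ a x ≤ b} ↔ inner ℝ a c + r * ‖a‖ ≤ b := by
  constructor
  · intro h
    have hmem : c + (r * ‖a‖⁻¹) • a ∈ closedBall c r := by
      rw [mem_closedBall, dist_eq_norm, add_sub_cancel_left, norm_smul, Real.norm_eq_abs,
        abs_of_nonneg (by positivity), mul_assoc]
      exact mul_le_of_le_one_right hr (inv_mul_le_one_of_le₀ le_rfl (norm_nonneg a))
    have := h hmem
    rw [mem_ofPred_eq, inner_add_right, real_inner_smul_right, real_inner_self_eq_norm_sq] at this
    rcases eq_or_ne ‖a‖ 0 with ha | ha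
    · simpa [ha] using this
    · convert this using 2; field_simp
  · intro h x hx
    have hx' : ‖x - c‖ ≤ r := by rwa [← dist_eq_norm]
    calc inner ℝ a x = inner ℝ a c + inner ℝ a (x - c) := by rw [inner_sub_right]; ring
      _ ≤ inner ℝ a c + ‖a‖ * ‖x - c‖ := by gcongr; exact real_inner_le_norm a (x - c)
      _ ≤ inner ℝ a c + r * ‖a‖ := by rw [mul_comm r]; gcongr
      _ ≤ b := h

theorem EuclideanSpace.norm_single_sub_single {ι : Type*} [Fintype ι] [DecidableEq ι] {i j : ι}
    (h : i ≠ j) : ‖single i (1 : ℝ) - single j 1‖ = √2 := by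
  have horth : inner ℝ (single i (1 : ℝ)) (single j 1) = 0 := by
    simp [inner_single_left, h.symm]
  rw [← Real.sqrt_sq (norm_nonneg _), norm_sub_sq_real, horth]
  norm_num

theorem sum_range_sub_mul_ite_lt {R : Type*} [CommRing R] (Y : ℕ → R) {i m : ℕ} (h : i < m) :
    ∑ k ∈ range m, (Y k - Y (k + 1)) * (if i < k then 1 else 0) = Y (i + 1) - Y m := by
  induction m, h using Nat.le_induction with
  | base => simp +contextual [sum_eq_zero, not_lt.2]
  | succ m hm ih => rw [sum_range_succ, ih, if_pos (show i < m from hm)]; ring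

def kuhnSet (n : ℕ) : Set (EuclideanSpace ℝ (Fin n)) :=
  {x | (∀ i, 0 ≤ x i ∧ x i ≤ 1) ∧ ∀ i j, i < j → x j ≤ x i}

theorem kuhnSet_eq_iInter (n : ℕ) :
    kuhnSet n = (⋂ i, {x | inner ℝ (-single i 1) x ≤ 0}) ∩ (⋂ i, {x | inner ℝ (single i 1) x ≤ 1})
      ∩ ⋂ (i) (j) (_ : i < j), {x | inner ℝ (single j 1 - single i 1) x ≤ (0 : ℝ)} := by
  ext x
  simp [kuhnSet, inner_single_left, inner_sub_left, forall_and]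

theorem convex_kuhnSet (n : ℕ) : Convex ℝ (kuhnSet n) := by
  rw [kuhnSet_eq_iInter]
  refine ((convex_iInter fun i => ?_).inter (convex_iInter fun i => ?_)).inter
    (convex_iInter₂ fun i j => convex_iInter fun _ => ?_) <;>
  exact convex_halfSpace_le (innerₛₗ ℝ _).isLinear _

theorem closedBall_subset_kuhnSet_iff {n : ℕ} {c : EuclideanSpace ℝ (Fin n)} {r : ℝ} (hr : 0 ≤ r) :
    closedBall c r ⊆ kuhnSet n ↔
      (∀ i, r ≤ c i ∧ c i + r ≤ 1) ∧ ∀ i j, i < j → c j + √2 * r ≤ c i := by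
  simp only [kuhnSet_eq_iInter, subset_inter_iff, subset_iInter_iff,
    closedBall_subset_setOf_inner_le_iff hr]
  simp +contextual only [inner_neg_left, inner_single_left, inner_sub_left, norm_neg,
    PiLp.norm_single, norm_single_sub_single (ne_of_gt _)]
  simp only [map_one, one_mul, norm_one, mul_one, forall_and]
  refine and_congr (and_congr (forall_congr' fun i => ?_) Iff.rfl)
    (forall₂_congr fun i j => imp_congr_right fun _ => ?_) <;> constructor <;> intro h <;> linarith

theorem kuhnSimplex_subset_kuhnSet (n : ℕ) : kuhnSimplex n ⊆ kuhnSet n := by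
  refine convexHull_min ?_ (convex_kuhnSet n)
  rintro _ ⟨k, rfl⟩
  refine ⟨fun i => ?_, fun i j hij => ?_⟩ <;> simp only [kuhnVertex, WithLp.equiv_symm_apply]
  · split_ifs <;> norm_num
  · have : (i : ℕ) < j := hij
    split_ifs <;> first | omega | norm_num

theorem kuhnSet_subset_kuhnSimplex (n : ℕ) : kuhnSet n ⊆ kuhnSimplex n := by
  rintro x ⟨hbd, hanti⟩
  let Y : ℕ → ℝ
    | 0 => 1
    | k + 1 => if h : k < n then x ⟨k, h⟩ else 0
  have hY_succ_le : ∀ k, Y (k + 1) ≤ Y k := by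
    rintro (_ | k)
    · dsimp only [Y]; split_ifs <;> first | exact (hbd _).2 | norm_num
    · dsimp only [Y]
      split_ifs with h₁ h₂
      · exact hanti _ _ (Fin.mk_lt_mk.2 k.lt_succ_self)
      · omega
      · exact (hbd _).1
      · rfl
  have hx : x = ∑ k : Fin (n + 1), (Y k - Y (k + 1)) • kuhnVertex n k := by
    ext i
    simp only [WithLp.ofLp_sum, WithLp.ofLp_smul, Finset.sum_apply, Pi.smul_apply, smul_eq_mul,
      kuhnVertex, WithLp.equiv_symm_apply]
    rw [Fin.sum_univ_eq_sum_range (fun k => (Y k - Y (k + 1)) * if (i : ℕ) < k then 1 else 0),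
      sum_range_sub_mul_ite_lt Y (by omega)]
    simp [Y]
  rw [hx]
  refine (convex_convexHull ℝ _).sum_mem (fun k _ => sub_nonneg.2 (hY_succ_le k)) ?_
    (fun k _ => subset_convexHull ℝ _ ⟨k, rfl⟩)
  rw [Fin.sum_univ_eq_sum_range (fun k => Y k - Y (k + 1)), sum_range_sub']
  simp [Y]

theorem kuhnSimplex_eq_kuhnSet (n : ℕ) : kuhnSimplex n = kuhnSet n :=
  (kuhnSimplex_subset_kuhnSet n).antisymm (kuhnSet_subset_kuhnSimplex n)

theorem two_add_sub_one_mul_sqrt_two_pos (n : ℕ) : 0 < 2 + ((n : ℝ) - 1) * √2 := by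
  have h2 : √2 < 2 := by linarith [Real.sqrt_two_lt_three_halves]
  nlinarith [Real.sqrt_nonneg 2, (Nat.cast_nonneg n : (0 : ℝ) ≤ n)]

noncomputable def kuhnInradius (n : ℕ) : ℝ := 1 / (2 + ((n : ℝ) - 1) * √2)

theorem kuhnInradius_pos (n : ℕ) : 0 < kuhnInradius n :=
  one_div_pos.2 (two_add_sub_one_mul_sqrt_two_pos n)

noncomputable def kuhnIncenter (n : ℕ) : EuclideanSpace ℝ (Fin n) :=
  WithLp.toLp 2 fun i => kuhnInradius n * (1 + ((n : ℝ) - 1 - i) * √2)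

theorem closedBall_kuhnIncenter_subset (n : ℕ) :
    closedBall (kuhnIncenter n) (kuhnInradius n) ⊆ kuhnSet n := by
  have hρ := kuhnInradius_pos n
  have hρ_mul : kuhnInradius n * (2 + ((n : ℝ) - 1) * √2) = 1 :=
    one_div_mul_cancel (two_add_sub_one_mul_sqrt_two_pos n).ne'
  have hs := Real.sqrt_nonneg 2
  have hi : ∀ i : Fin n, (i : ℝ) ≤ n - 1 := fun i => by
    have : (i : ℝ) + 1 ≤ n := by exact_mod_cast i.isLt
    linarith
  refine (closedBall_subset_kuhnSet_iff hρ.le).2 ⟨fun i => ⟨?_, ?_⟩, fun i j hij => ?_⟩ <;>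
    simp only [kuhnIncenter, PiLp.toLp_apply]
  · nlinarith [mul_nonneg hρ.le (mul_nonneg (sub_nonneg.2 (hi i)) hs)]
  · nlinarith [mul_nonneg hρ.le (mul_nonneg (Nat.cast_nonneg (i : ℕ) : (0 : ℝ) ≤ i) hs)]
  · have : (i : ℝ) + 1 ≤ j := by exact_mod_cast (Fin.lt_def.1 hij)
    nlinarith [mul_nonneg hρ.le (mul_nonneg (sub_nonneg.2 this) hs)]

theorem le_kuhnInradius_of_closedBall_subset {n : ℕ} (hn : 1 ≤ n) {c : EuclideanSpace ℝ (Fin n)}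
    {r : ℝ} (hr : 0 ≤ r) (h : closedBall c r ⊆ kuhnSet n) : r ≤ kuhnInradius n := by
  obtain ⟨hbd, hanti⟩ := (closedBall_subset_kuhnSet_iff hr).1 h
  have htele : ∀ k (hk : k < n), c ⟨k, hk⟩ + k * (√2 * r) ≤ c ⟨0, hn⟩ := by
    intro k
    induction k with
    | zero => simp
    | succ k ih =>
      intro hk
      have := hanti ⟨k, by omega⟩ ⟨k + 1, hk⟩ (Fin.mk_lt_mk.2 k.lt_succ_self)
      push_cast
      linarith [ih (by omega)]
  have hlast := htele (n - 1) (by omega)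
  rw [Nat.cast_sub hn, Nat.cast_one] at hlast
  rw [kuhnInradius, le_div_iff₀ (two_add_sub_one_mul_sqrt_two_pos n)]
  linarith [(hbd ⟨n - 1, by omega⟩).1, (hbd ⟨0, hn⟩).2]

theorem isGreatest_kuhnInradius {n : ℕ} (hn : 1 ≤ n) :
    IsGreatest {r | 0 ≤ r ∧ ∃ c, closedBall c r ⊆ kuhnSimplex n} (kuhnInradius n) := by
  rw [kuhnSimplex_eq_kuhnSet]
  refine ⟨⟨(kuhnInradius_pos n).le, _, closedBall_kuhnIncenter_subset n⟩, ?_⟩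
  rintro r ⟨hr, c, hc⟩
  exact le_kuhnInradius_of_closedBall_subset hn hr hc

/-- The inradius diameter of the Kuhn simplex satisfies `1/r(T̂) = 1 + (n−1)/√2`. -/
theorem kuhn_inDiam (n : ℕ) (hn : 1 ≤ n) :
    1 / inDiam (kuhnSimplex n) = 1 + ((n : ℝ) - 1) / Real.sqrt 2 := by
  rw [inDiam, (isGreatest_kuhnInradius hn).csSup_eq, kuhnInradius]
  field_simp
  linear_combination ((n : ℝ) - 1) * Real.sq_sqrt (zero_le_two : (0 : ℝ) ≤ 2)
end
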